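/- Let E be an exponential family on a finite set X of cardinality N, with extended tangent space T. If sup_P inf_{Q∈E} D(P‖Q) = log 2 (supremum over all probability distributions P on X), then the dimension of E satisfies dim T − 1 ≥ ⌈N/2⌉ − 1, i.e. dim T ≥ ⌈N/2⌉. -/

import Mathlib

open scoped BigOperators Classical

noncomputable section

variable {X : Type*}

/-- A probability distribution on a finite set `X`. -/
def IsProb [Fintype X] (P : X → ℝ) : Prop :=
  (∀ x, 0 ≤ P x) ∧ ∑ x, P x = 1

/-- Information divergence `D(P‖Q)` with values in `EReal`, equal to `⊤` if the
support of `P` is not contained in the support of `Q`.  (The convention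
`0 · log 0 = 0` holds automatically since `Real.log 0 = 0`.) -/
def KL [Fintype X] (P Q : X → ℝ) : EReal :=
  if ∀ x, Q x = 0 → P x = 0 then ((∑ x, P x * Real.log (P x / Q x) : ℝ) : EReal) else ⊤

/-- The exponential family with strictly positive reference measure `ν` and extended
tangent space `T` (a subspace of `ℝ^X` containing the constants): the set of strictly
positive probability distributions `P` with `log (P/ν) ∈ T`. -/
def expFam [Fintype X] (ν : X → ℝ) (T : Submodule ℝ (X → ℝ)) : Set (X → ℝ) :=
  {P | (∀ x, 0 < P x) ∧ ∑ x, P x = 1 ∧ (fun x => Real.log (P x / ν x)) ∈ T}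

/-- `sup_P inf_{Q ∈ E} D(P‖Q)`, supremum over all probability distributions `P`. -/
def maxDiv [Fintype X] (E : Set (X → ℝ)) : EReal :=
  ⨆ P ∈ {P : X → ℝ | IsProb P}, ⨅ Q ∈ E, KL P Q

/-- The orthogonal complement of `T` in `ℝ^X` w.r.t. the standard inner product
(the normal space of the exponential family with extended tangent space `T`). -/
def orthSpace [Fintype X] (T : Submodule ℝ (X → ℝ)) : Set (X → ℝ) :=
  {u | ∀ t ∈ T, ∑ x, u x * t x = 0}

/-- A circuit vector of a set `N ⊆ ℝ^X`: a nonzero element whose support is minimal,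
i.e. every `u ∈ N` with `supp u ⊆ supp v` is a scalar multiple of `v`. -/
def IsCircuitVector (N : Set (X → ℝ)) (v : X → ℝ) : Prop :=
  v ∈ N ∧ v ≠ 0 ∧ ∀ u ∈ N, Function.support u ⊆ Function.support v → ∃ α : ℝ, u = α • v

/-- A circuit of `N`: the support of a circuit vector. -/
def IsCircuit (N : Set (X → ℝ)) (σ : Set X) : Prop :=
  ∃ v, IsCircuitVector N v ∧ σ = Function.support v

/-- The closed partition model of the partition given by the equivalence relation `r`:
all probability distributions constant on each block. -/
def partModel [Fintype X] (r : X → X → Prop) : Set (X → ℝ) :=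
  {Q | IsProb Q ∧ ∀ x y, r x y → Q x = Q y}

/-- The partition exponential family of the partition given by the equivalence
relation `r`: all strictly positive probability distributions constant on each block. -/
def partExpFam [Fintype X] (r : X → X → Prop) : Set (X → ℝ) :=
  {P | (∀ x, 0 < P x) ∧ ∑ x, P x = 1 ∧ ∀ x y, r x y → P x = P y}

/-- The set `X̲` of points not annihilated by all of `N`. -/
def underlineSet (N : Set (X → ℝ)) : Set X := {x | ∃ v ∈ N, v x ≠ 0}

/-- The relation `x ∼ y` : every `v ∈ N` with `v x ≠ 0` has `v y ≠ 0`. -/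
def coRel (N : Set (X → ℝ)) (x y : X) : Prop := ∀ v ∈ N, v x ≠ 0 → v y ≠ 0

/-- `Z` is an equivalence class of `∼` on `X̲`. -/
def IsClassOf (N : Set (X → ℝ)) (Z : Set X) : Prop :=
  ∃ x ∈ underlineSet N, Z = {y | coRel N x y}

end

/-!
Take `u ⊥ T`, `u ≠ 0`. Since `T` contains the constants, `∑ u = 0`, so `u⁺` and `u⁻` have the same
mass `a` and normalise to distributions `P`, `R` with disjoint supports. For `Q ∈ E`, orthogonality
of `u` to `log (Q / ν) ∈ T` gives `a (D(P‖Q) - D(R‖Q)) = F u := ∑ u log (|u| / ν)`, while Gibbs'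
inequality on the two supports gives `exp (-D(P‖Q)) + exp (-D(R‖Q)) ≤ 1`. Together,
`D(P‖Q) ≥ log (1 + exp (F u / a))`, so `maxDiv E ≤ log 2` forces `F u ≤ 0`, and `F u = 0` by symmetry.

So `F` vanishes on the subspace `N = T^⊥`. Take `u ∈ N` of maximal support. Differentiating
`F (u + s w' + t w)` in `t` and then in `s` gives `∑ w w' / u = 0` for `w, w' ∈ N`, so `w ↦ w / u`
embeds `N` linearly into `N^⊥ = T`. Hence `|X| = dim T + dim N ≤ 2 dim T`.
-/

open Real Finset Function Filter Topology Module

section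

variable {X : Type*} [Fintype X]

noncomputable def klSum (P Q : X → ℝ) : ℝ := ∑ x, P x * log (P x / Q x)

lemma KL_eq_klSum {P Q : X → ℝ} (hQ : ∀ x, 0 < Q x) : KL P Q = klSum P Q :=
  if_pos fun x hx => absurd hx (hQ x).ne'

lemma isProb_div_sum {f : X → ℝ} (hf : ∀ x, 0 ≤ f x) (hpos : 0 < ∑ x, f x) :
    IsProb fun x => f x / ∑ y, f y :=
  ⟨fun x => div_nonneg (hf x) hpos.le, by rw [← sum_div, div_self hpos.ne']⟩

lemma exp_neg_klSum_le {p q : X → ℝ} (hp : IsProb p) (hq : ∀ x, 0 < q x) :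
    exp (-klSum p q) ≤ ∑ x with 0 < p x, q x := by
  have hsupp : ∀ f : X → ℝ, (∀ x, p x = 0 → f x = 0) → ∑ x with 0 < p x, f x = ∑ x, f x :=
    fun f hf => sum_filter_of_ne fun x _ hfx => (hp.1 x).lt_of_ne' fun h => hfx (hf x h)
  have hp1 : ∑ x with 0 < p x, p x = 1 := (hsupp p fun _ h => h).trans hp.2
  have hpos : 0 < ∑ x with 0 < p x, q x :=
    sum_pos (fun x _ => hq x) (nonempty_of_sum_ne_zero (f := p) (by rw [hp1]; exact one_ne_zero))
  rw [← le_log_iff_exp_le hpos]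
  calc -klSum p q = ∑ x with 0 < p x, p x • log (q x / p x) := by
        rw [klSum, ← sum_neg_distrib, ← hsupp _ fun x h => by simp [h]]
        refine sum_congr rfl fun x _ => ?_
        rw [smul_eq_mul, ← inv_div, log_inv, mul_neg, neg_neg]
    _ ≤ log (∑ x with 0 < p x, p x • (q x / p x)) :=
        strictConcaveOn_log_Ioi.concaveOn.le_map_sum (fun x hx => (mem_filter.1 hx).2.le) hp1
          fun x hx => div_pos (hq x) (mem_filter.1 hx).2
    _ = log (∑ x with 0 < p x, q x) := by
        congr 1
        refine sum_congr rfl fun x hx => ?_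
        rw [smul_eq_mul, mul_div_cancel₀ _ (mem_filter.1 hx).2.ne']

lemma exp_neg_klSum_add_exp_neg_klSum_le_one {P R Q : X → ℝ} (hP : IsProb P) (hR : IsProb R)
    (hPR : ∀ x, P x = 0 ∨ R x = 0) (hQ : ∀ x, 0 < Q x) (hQ1 : ∑ x, Q x = 1) :
    exp (-klSum P Q) + exp (-klSum R Q) ≤ 1 := by
  have hdisj : Disjoint ({x | 0 < P x} : Finset X) ({x | 0 < R x} : Finset X) := by
    refine disjoint_filter.2 fun x _ hPx hRx => ?_
    rcases hPR x with h | h <;> simp_all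
  calc exp (-klSum P Q) + exp (-klSum R Q)
      ≤ ∑ x with 0 < P x, Q x + ∑ x with 0 < R x, Q x :=
        add_le_add (exp_neg_klSum_le hP hQ) (exp_neg_klSum_le hR hQ)
    _ = ∑ x ∈ ({x | 0 < P x} : Finset X) ∪ ({x | 0 < R x} : Finset X), Q x := (sum_union hdisj).symm
    _ ≤ 1 := hQ1 ▸ sum_le_univ_sum_of_nonneg fun x => (hQ x).le

lemma log_one_add_exp_le {a b c : ℝ} (h : exp (-a) + exp (-b) ≤ 1) (hab : a = b + c) :
    log (1 + exp c) ≤ a := by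
  rw [log_le_iff_le_exp (by positivity)]
  have hb : exp (-b) = exp (-a) * exp c := by rw [← exp_add]; congr 1; linarith
  calc 1 + exp c = exp a * (exp (-a) + exp (-b)) := by
        rw [hb, mul_add, ← mul_assoc, ← exp_add, add_neg_cancel, exp_zero, one_mul]
    _ ≤ exp a := mul_le_of_le_one_right (exp_pos a).le h

lemma posPart_mul_log_sub_negPart_mul_log (s : ℝ) {a q : ℝ} (ha : a ≠ 0) (hq : q ≠ 0) :
    s⁺ * log (s⁺ / a / q) - s⁻ * log (s⁻ / a / q) = s * (log s - log a - log q) := by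
  rcases lt_trichotomy s 0 with hs | rfl | hs
  · have hs' : -s ≠ 0 := by linarith
    rw [posPart_eq_zero.2 hs.le, negPart_eq_neg.2 hs.le, log_div (div_ne_zero hs' ha) hq,
      log_div hs' ha, log_neg_eq_log]
    ring
  · simp
  · rw [posPart_eq_self.2 hs.le, negPart_eq_zero.2 hs.le, log_div (div_ne_zero hs.ne' ha) hq,
      log_div hs.ne' ha]
    ring

lemma coe_le_maxDiv {E : Set (X → ℝ)} (hE : ∀ Q ∈ E, ∀ x, 0 < Q x) {P : X → ℝ} (hP : IsProb P)
    {L : ℝ} (hL : ∀ Q ∈ E, L ≤ klSum P Q) : (L : EReal) ≤ maxDiv E :=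
  calc (L : EReal) ≤ ⨅ Q ∈ E, KL P Q :=
        le_iInf₂ fun Q hQ => (KL_eq_klSum (hE Q hQ)).symm ▸ EReal.coe_le_coe_iff.2 (hL Q hQ)
    _ ≤ maxDiv E := le_biSup (fun P => ⨅ Q ∈ E, KL P Q) hP

end

section

variable {X : Type*} [Fintype X]

-- `Real.log` is even, so this is `∑ u log (|u| / ν)`.
noncomputable def mulLogDiv (ν u : X → ℝ) : ℝ := ∑ x, u x * (log (u x) - log (ν x))

variable {ν : X → ℝ} {T : Submodule ℝ (X → ℝ)} {u : X → ℝ}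

lemma sum_eq_zero_of_mem_orthSpace (h1 : (fun _ => (1 : ℝ)) ∈ T) (hu : u ∈ orthSpace T) :
    ∑ x, u x = 0 := by
  simpa using hu _ h1

lemma sum_mul_log_eq_of_mem_orthSpace (hν : ∀ x, ν x ≠ 0) (hu : u ∈ orthSpace T) {Q : X → ℝ}
    (hQ : Q ∈ expFam ν T) : ∑ x, u x * log (Q x) = ∑ x, u x * log (ν x) := by
  have h := hu _ hQ.2.2
  simp only [log_div (hQ.1 _).ne' (hν _), mul_sub, sum_sub_distrib] at h
  linarith

lemma neg_mem_orthSpace (hu : u ∈ orthSpace T) : -u ∈ orthSpace T := fun t ht => by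
  simp [sum_neg_distrib, hu t ht]

lemma mulLogDiv_neg : mulLogDiv ν (-u) = -mulLogDiv ν u := by
  simp [mulLogDiv, ← sum_neg_distrib]

lemma sum_negPart_eq_sum_posPart (hsum : ∑ x, u x = 0) : ∑ x, (u x)⁻ = ∑ x, (u x)⁺ := by
  have h : ∑ x, ((u x)⁺ - (u x)⁻) = 0 := by simpa [posPart_sub_negPart] using hsum
  rw [sum_sub_distrib] at h
  linarith

lemma sum_posPart_pos (hsum : ∑ x, u x = 0) (hu : u ≠ 0) : 0 < ∑ x, (u x)⁺ := by
  refine (sum_nonneg fun x _ => posPart_nonneg _).lt_of_ne fun h => hu (funext fun x => ?_)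
  have hneg := (sum_negPart_eq_sum_posPart hsum).trans h.symm
  rw [← posPart_sub_negPart (u x),
    (sum_eq_zero_iff_of_nonneg fun x _ => posPart_nonneg _).1 h.symm x (mem_univ x),
    (sum_eq_zero_iff_of_nonneg fun x _ => negPart_nonneg _).1 hneg x (mem_univ x), sub_zero]
  rfl

lemma mul_klSum_posPart_sub_mul_klSum_negPart (hν : ∀ x, ν x ≠ 0)
    (h1 : (fun _ => (1 : ℝ)) ∈ T) (hu : u ∈ orthSpace T) {Q : X → ℝ} (hQ : Q ∈ expFam ν T)
    {a : ℝ} (ha : a ≠ 0) :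
    a * klSum (fun x => (u x)⁺ / a) Q - a * klSum (fun x => (u x)⁻ / a) Q = mulLogDiv ν u :=
  calc _ = ∑ x, u x * (log (u x) - log a - log (Q x)) := by
        simp only [klSum, mul_sum, ← sum_sub_distrib]
        refine sum_congr rfl fun x _ => ?_
        rw [← posPart_mul_log_sub_negPart_mul_log (u x) ha (hQ.1 x).ne']
        field_simp
    _ = mulLogDiv ν u - (∑ x, u x) * log a - (∑ x, u x * log (Q x) - ∑ x, u x * log (ν x)) := by
        simp only [mulLogDiv, sum_mul, ← sum_sub_distrib]
        exact sum_congr rfl fun x _ => by ring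
    _ = mulLogDiv ν u := by
        rw [sum_eq_zero_of_mem_orthSpace h1 hu, sum_mul_log_eq_of_mem_orthSpace hν hu hQ]
        ring

lemma log_one_add_exp_le_klSum (hν : ∀ x, ν x ≠ 0) (h1 : (fun _ => (1 : ℝ)) ∈ T)
    (hu : u ∈ orthSpace T) (hu0 : u ≠ 0) {Q : X → ℝ} (hQ : Q ∈ expFam ν T) :
    log (1 + exp (mulLogDiv ν u / ∑ x, (u x)⁺)) ≤ klSum (fun x => (u x)⁺ / ∑ y, (u y)⁺) Q := by
  have hsum := sum_eq_zero_of_mem_orthSpace h1 hu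
  have ha := sum_posPart_pos hsum hu0
  have hP := isProb_div_sum (fun x => posPart_nonneg (u x)) ha
  have hR := isProb_div_sum (fun x => negPart_nonneg (u x))
    ((sum_negPart_eq_sum_posPart hsum).symm ▸ ha)
  rw [sum_negPart_eq_sum_posPart hsum] at hR
  have hPR : ∀ x, (u x)⁺ / ∑ y, (u y)⁺ = 0 ∨ (u x)⁻ / ∑ y, (u y)⁺ = 0 := fun x => by
    rcases le_total (u x) 0 with h | h
    · simp [posPart_eq_zero.2 h]
    · simp [negPart_eq_zero.2 h]
  refine log_one_add_exp_le (exp_neg_klSum_add_exp_neg_klSum_le_one hP hR hPR hQ.1 hQ.2.1) ?_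
  rw [← mul_klSum_posPart_sub_mul_klSum_negPart hν h1 hu hQ ha.ne']
  field_simp
  ring

lemma mulLogDiv_nonpos (hν : ∀ x, ν x ≠ 0) (h1 : (fun _ => (1 : ℝ)) ∈ T)
    (hmax : maxDiv (expFam ν T) ≤ log 2) (hu : u ∈ orthSpace T) : mulLogDiv ν u ≤ 0 := by
  rcases eq_or_ne u 0 with rfl | hu0
  · simp [mulLogDiv]
  have ha := sum_posPart_pos (sum_eq_zero_of_mem_orthSpace h1 hu) hu0
  have hlog : log (1 + exp (mulLogDiv ν u / ∑ x, (u x)⁺)) ≤ log 2 :=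
    EReal.coe_le_coe_iff.1 <| (coe_le_maxDiv (fun Q hQ => hQ.1)
      (isProb_div_sum (fun x => posPart_nonneg (u x)) ha)
      fun Q hQ => log_one_add_exp_le_klSum hν h1 hu hu0 hQ).trans hmax
  rw [log_le_log_iff (by positivity) two_pos] at hlog
  have hexp : exp (mulLogDiv ν u / ∑ x, (u x)⁺) ≤ 1 := by linarith
  simpa using (div_le_iff₀ ha).1 (exp_le_one_iff.1 hexp)

lemma mulLogDiv_eq_zero (hν : ∀ x, ν x ≠ 0) (h1 : (fun _ => (1 : ℝ)) ∈ T)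
    (hmax : maxDiv (expFam ν T) ≤ log 2) (hu : u ∈ orthSpace T) : mulLogDiv ν u = 0 :=
  le_antisymm (mulLogDiv_nonpos hν h1 hmax hu) <| by
    simpa [mulLogDiv_neg] using mulLogDiv_nonpos hν h1 hmax (neg_mem_orthSpace hu)

end

section

variable {X : Type*} [Fintype X]

lemma hasDerivAt_mul_log_sub_line {p : ℝ} (w c : ℝ) (hp : p ≠ 0) :
    HasDerivAt (fun t => (p + t * w) * (log (p + t * w) - c)) (w * (log p + 1 - c)) 0 := by
  have hline : HasDerivAt (fun t => p + t * w) w 0 := by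
    simpa using ((hasDerivAt_id (0 : ℝ)).mul_const w).const_add p
  have hp' : p + 0 * w ≠ 0 := by simpa using hp
  refine (hline.fun_mul ((hline.log hp').sub_const c)).congr_deriv ?_
  simp only [zero_mul, add_zero]
  field_simp
  ring

lemma hasDerivAt_log_line {p : ℝ} (w : ℝ) (hp : p ≠ 0) :
    HasDerivAt (fun t => log (p + t * w)) (w / p) 0 := by
  have hline : HasDerivAt (fun t => p + t * w) w 0 := by
    simpa using ((hasDerivAt_id (0 : ℝ)).mul_const w).const_add p
  simpa using hline.log (by simpa using hp)

lemma hasDerivAt_mulLogDiv_line (ν : X → ℝ) {v w : X → ℝ} (hwv : support w ⊆ support v) :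
    HasDerivAt (fun t : ℝ => mulLogDiv ν (v + t • w))
      (∑ x, w x * (log (v x) + 1 - log (ν x))) 0 := by
  refine HasDerivAt.fun_sum fun x _ => ?_
  by_cases hvx : v x = 0
  · have hwx : w x = 0 := notMem_support.1 fun hx => hwv hx hvx
    simpa [hvx, hwx] using hasDerivAt_const (0 : ℝ) (0 : ℝ)
  · simpa using hasDerivAt_mul_log_sub_line (w x) (log (ν x)) hvx

lemma hasDerivAt_sum_mul_log_line (ν : X → ℝ) {u w w' : X → ℝ} (hwu : support w' ⊆ support u) :
    HasDerivAt (fun t : ℝ => ∑ x, w x * (log (u x + t * w' x) + 1 - log (ν x)))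
      (∑ x, w x * w' x / u x) 0 := by
  refine HasDerivAt.fun_sum fun x _ => ?_
  by_cases hux : u x = 0
  · have hwx : w' x = 0 := notMem_support.1 fun hx => hwu hx hux
    simpa [hux, hwx] using hasDerivAt_const (0 : ℝ) (w x * (1 - log (ν x)))
  · simpa only [add_sub_assoc, mul_div_assoc] using
      ((hasDerivAt_log_line (w' x) hux).add_const (1 - log (ν x))).const_mul (w x)

lemma eventually_support_subset_add_smul (u w : X → ℝ) :
    ∀ᶠ t in 𝓝 (0 : ℝ), support u ⊆ support (u + t • w) := by
  have : ∀ x, ∀ᶠ t in 𝓝 (0 : ℝ), u x ≠ 0 → u x + t * w x ≠ 0 := fun x => by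
    by_cases hux : u x = 0
    · exact Eventually.of_forall fun _ h => absurd hux h
    · have hcont : ContinuousAt (fun t : ℝ => u x + t * w x) 0 := by fun_prop
      exact (hcont.eventually_ne (by simpa using hux)).mono fun _ h _ => h
  filter_upwards [eventually_all.2 this] with t ht x hx
  simpa using ht x hx

lemma exists_support_maximal (N : Submodule ℝ (X → ℝ)) :
    ∃ u ∈ N, ∀ w ∈ N, support w ⊆ support u := by
  obtain ⟨u, huN, hmax⟩ := Set.Finite.exists_maximalFor' support (N : Set (X → ℝ))
    (Set.toFinite _) ⟨0, N.zero_mem⟩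
  refine ⟨u, huN, fun w hwN x hwx => ?_⟩
  by_contra hux
  obtain ⟨t, hsub, ht⟩ := ((eventually_support_subset_add_smul u w).filter_mono
    nhdsWithin_le_nhds |>.and self_mem_nhdsWithin).exists (f := 𝓝[≠] (0 : ℝ))
  have hx : x ∈ support (u + t • w) := by
    simpa [notMem_support.1 hux] using And.intro ht hwx
  exact hux (hmax (N.add_mem huN (N.smul_mem t hwN)) hsub hx)

end

section

variable {X : Type*} [Fintype X] {ν : X → ℝ} {N : Submodule ℝ (X → ℝ)}

lemma sum_mul_log_add_one_eq_zero (hF : ∀ u ∈ N, mulLogDiv ν u = 0) {v : X → ℝ} (hv : v ∈ N)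
    (hvmax : ∀ w ∈ N, support w ⊆ support v) {w : X → ℝ} (hw : w ∈ N) :
    ∑ x, w x * (log (v x) + 1 - log (ν x)) = 0 := by
  have hzero : (fun t : ℝ => mulLogDiv ν (v + t • w)) = fun _ => 0 :=
    funext fun t => hF _ (N.add_mem hv (N.smul_mem t hw))
  have := hasDerivAt_mulLogDiv_line ν (hvmax w hw)
  rw [hzero] at this
  exact this.unique (hasDerivAt_const 0 0)

lemma sum_mul_mul_div_eq_zero (hF : ∀ u ∈ N, mulLogDiv ν u = 0) {u : X → ℝ} (hu : u ∈ N)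
    (humax : ∀ w ∈ N, support w ⊆ support u) {w w' : X → ℝ} (hw : w ∈ N) (hw' : w' ∈ N) :
    ∑ x, w x * w' x / u x = 0 := by
  have hzero : ∀ᶠ t in 𝓝 (0 : ℝ), ∑ x, w x * (log (u x + t * w' x) + 1 - log (ν x)) = 0 := by
    filter_upwards [eventually_support_subset_add_smul u w'] with t ht
    exact sum_mul_log_add_one_eq_zero hF (N.add_mem hu (N.smul_mem t hw'))
      (fun w'' hw'' => (humax w'' hw'').trans ht) hw
  exact (hasDerivAt_sum_mul_log_line ν (humax w' hw')).unique
    ((hasDerivAt_const (0 : ℝ) (0 : ℝ)).congr_of_eventuallyEq hzero)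

end

section

variable {X : Type*} [Fintype X]

lemma dotProductBilin_isSymm : (dotProductBilin ℝ ℝ : LinearMap.BilinForm ℝ (X → ℝ)).IsSymm :=
  ⟨fun u v => by simp [dotProduct_comm]⟩

lemma dotProductBilin_nondegenerate :
    (dotProductBilin ℝ ℝ : LinearMap.BilinForm ℝ (X → ℝ)).Nondegenerate :=
  ⟨fun u hu => by simpa using hu u, fun u hu => by simpa using hu u⟩

lemma mem_orthogonal_dotProductBilin_iff {T : Submodule ℝ (X → ℝ)} {u : X → ℝ} :
    u ∈ LinearMap.BilinForm.orthogonal (dotProductBilin ℝ ℝ) T ↔ u ∈ orthSpace T := by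
  simp [LinearMap.BilinForm.mem_orthogonal_iff, orthSpace, dotProduct, mul_comm]

lemma finrank_add_finrank_orthogonal_dotProductBilin (T : Submodule ℝ (X → ℝ)) :
    finrank ℝ T + finrank ℝ (LinearMap.BilinForm.orthogonal (dotProductBilin ℝ ℝ) T) =
      Fintype.card X := by
  have h := LinearMap.BilinForm.finrank_orthogonal (dotProductBilin_nondegenerate (X := X)) T
  have hT : finrank ℝ T ≤ Fintype.card X := by simpa using Submodule.finrank_le T
  rw [Module.finrank_fintype_fun_eq_card] at h
  omega

theorem card_add_one_div_two_le_finrank (ν : X → ℝ) (T : Submodule ℝ (X → ℝ))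
    (hF : ∀ u ∈ orthSpace T, mulLogDiv ν u = 0) :
    (Fintype.card X + 1) / 2 ≤ finrank ℝ T := by
  have hdim := finrank_add_finrank_orthogonal_dotProductBilin T
  set B : LinearMap.BilinForm ℝ (X → ℝ) := dotProductBilin ℝ ℝ
  set N := B.orthogonal T
  have hFN : ∀ w ∈ N, mulLogDiv ν w = 0 := fun w hw =>
    hF w (mem_orthogonal_dotProductBilin_iff.1 hw)
  obtain ⟨u, hu, humax⟩ := exists_support_maximal N
  have hdiv : ∀ w : N, u⁻¹ * (w : X → ℝ) ∈ T := fun w => by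
    rw [← LinearMap.BilinForm.orthogonal_orthogonal dotProductBilin_nondegenerate
      dotProductBilin_isSymm.isRefl T, LinearMap.BilinForm.mem_orthogonal_iff]
    intro n hn
    simpa [B, dotProduct, mul_div_assoc, div_eq_inv_mul, mul_left_comm] using
      sum_mul_mul_div_eq_zero hFN hu humax hn w.2
  let φ : N →ₗ[ℝ] T := ((LinearMap.mulLeft ℝ u⁻¹).comp N.subtype).codRestrict T hdiv
  have hφ : Function.Injective φ := by
    rw [← LinearMap.ker_eq_bot, Submodule.eq_bot_iff]
    intro w hw
    ext x
    have hx : (u x)⁻¹ * (w : X → ℝ) x = 0 :=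
      congr_fun (congrArg Subtype.val (LinearMap.mem_ker.1 hw)) x
    by_cases hux : u x = 0
    · exact notMem_support.1 fun hwx => humax w w.2 hwx hux
    · exact (mul_eq_zero.1 hx).resolve_left (inv_ne_zero hux)
  have := LinearMap.finrank_le_finrank_of_injective hφ
  omega

end

theorem stmt7_general (X : Type*) [Fintype X]
    (ν : X → ℝ) (hν : ∀ x, 0 < ν x)
    (T : Submodule ℝ (X → ℝ)) (h1 : (fun _ => (1 : ℝ)) ∈ T)
    (hmax : maxDiv (expFam ν T) = ((Real.log 2 : ℝ) : EReal)) :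
    (Fintype.card X + 1) / 2 ≤ Module.finrank ℝ T :=
  card_add_one_div_two_le_finrank ν T fun _ hu =>
    mulLogDiv_eq_zero (fun x => (hν x).ne') h1 hmax.le hu

/-- if `sup_P inf_{Q ∈ E} D(P‖Q) = log 2`, then `dim T ≥ ⌈N/2⌉`
(note `⌈N/2⌉ = (N+1)/2` with natural number division). -/
theorem stmt7 (X : Type*) [Fintype X] [Nonempty X]
    (ν : X → ℝ) (hν : ∀ x, 0 < ν x)
    (T : Submodule ℝ (X → ℝ)) (h1 : (fun _ => (1 : ℝ)) ∈ T)
    (hmax : maxDiv (expFam ν T) = ((Real.log 2 : ℝ) : EReal)) :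
    (Fintype.card X + 1) / 2 ≤ Module.finrank ℝ T :=
  stmt7_general X ν hν T h1 hmax
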